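/- If V_1, ..., V_k are (not necessarily disjoint) subsets of the vertex set of a graph G whose union is V(G), and G_i = G[V_i] denotes the subgraph induced by V_i, then Γ_d(G) ≤ Σ_{i=1}^k Γ_d(G_i). -/
import Mathlib


/-- An orientation of a simple graph `G`: each edge gets exactly one direction. -/
def IsOrientation {V : Type*} (G : SimpleGraph V) (o : V → V → Prop) : Prop :=
  (∀ u v, o u v → G.Adj u v) ∧
  (∀ u v, G.Adj u v → (o u v ∨ o v u)) ∧
  (∀ u v, o u v → ¬ o v u)

/-- A directed dominating set: every vertex outside `S` has an in-neighbor in `S`. -/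
def IsDirDomSet {V : Type*} (o : V → V → Prop) (S : Set V) : Prop :=
  ∀ v, v ∉ S → ∃ u ∈ S, o u v

/-- The directed domination number of a digraph (orientation). -/
noncomputable def dirDomNum (V : Type*) [Fintype V] (o : V → V → Prop) : ℕ :=
  sInf {n | ∃ S : Finset V, S.card = n ∧ IsDirDomSet o ↑S}

/-- The (upper) directed domination number of a graph: the maximum of `dirDomNum`
over all orientations. -/
noncomputable def GammaD {V : Type*} [Fintype V] (G : SimpleGraph V) : ℕ :=
  sSup {n | ∃ o, IsOrientation G o ∧ dirDomNum V o = n}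

/-- The independence number of a graph. -/
noncomputable def indepNum {V : Type*} [Fintype V] (G : SimpleGraph V) : ℕ :=
  sSup {n | ∃ S : Finset V, S.card = n ∧ ∀ u ∈ S, ∀ w ∈ S, u ≠ w → ¬ G.Adj u w}


lemma dirDom_exists {V : Type*} [Fintype V] (o : V → V → Prop) :
    ∃ S : Finset V, S.card = dirDomNum V o ∧ IsDirDomSet o ↑S := by
  have hne : {n | ∃ S : Finset V, S.card = n ∧ IsDirDomSet o ↑S}.Nonempty :=
    ⟨(Finset.univ : Finset V).card, Finset.univ, rfl, by simp [IsDirDomSet]⟩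
  exact Nat.sInf_mem hne

lemma dirDomNum_le_card {V : Type*} [Fintype V] (o : V → V → Prop) :
    dirDomNum V o ≤ Fintype.card V :=
  Nat.sInf_le ⟨Finset.univ, Finset.card_univ, by simp [IsDirDomSet]⟩

lemma gammaD_bdd {V : Type*} [Fintype V] (G : SimpleGraph V) :
    BddAbove {n | ∃ o, IsOrientation G o ∧ dirDomNum V o = n} :=
  ⟨Fintype.card V, by rintro n ⟨o, _, rfl⟩; exact dirDomNum_le_card o⟩

theorem stmt6 {V : Type*} [Fintype V] (G : SimpleGraph V) (k : ℕ)
    (f : Fin k → Finset V) (hcover : ∀ v : V, ∃ i, v ∈ f i) :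
    GammaD G ≤ ∑ i, GammaD (G.induce (↑(f i) : Set V)) := by
  classical
  apply csSup_le'
  rintro n ⟨o, ho, rfl⟩
  set oi : ∀ i : Fin k, (↑(f i) : Set V) → (↑(f i) : Set V) → Prop :=
    fun i u v => o ↑u ↑v with hoidef
  have hoi : ∀ i, IsOrientation (G.induce (↑(f i) : Set V)) (oi i) := by
    intro i
    refine ⟨fun u v h => ho.1 _ _ h, fun u v h => ho.2.1 _ _ h,
      fun u v h => ho.2.2 _ _ h⟩
  choose S hScard hSdom using fun i => dirDom_exists (oi i)
  set T : Finset V := Finset.univ.biUnion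
    (fun i => (S i).image (Subtype.val)) with hT
  have hTdom : IsDirDomSet o ↑T := by
    intro v hv
    obtain ⟨i, hvi⟩ := hcover v
    have hvi' : v ∈ (↑(f i) : Set V) := hvi
    set v' : (↑(f i) : Set V) := ⟨v, hvi'⟩ with hv'
    have hv'S : v' ∉ S i := by
      intro hmem
      apply hv
      simp only [hT, Finset.coe_biUnion, Finset.mem_coe, Set.mem_iUnion]
      exact ⟨i, Finset.mem_univ i, Finset.mem_image.mpr ⟨v', hmem, rfl⟩⟩
    obtain ⟨u', hu'S, hou'⟩ := hSdom i v' (by simpa using hv'S)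
    refine ⟨↑u', ?_, hou'⟩
    simp only [hT, Finset.coe_biUnion, Finset.mem_coe, Set.mem_iUnion]
    exact ⟨i, Finset.mem_univ i, Finset.mem_image.mpr ⟨u', hu'S, rfl⟩⟩
  have h1 : dirDomNum V o ≤ T.card := Nat.sInf_le ⟨T, rfl, hTdom⟩
  have h2 : T.card ≤ ∑ i, (S i).card := by
    rw [hT]
    refine (Finset.card_biUnion_le).trans ?_
    exact Finset.sum_le_sum fun i _ => Finset.card_image_le
  have h3 : ∀ i, (S i).card ≤ GammaD (G.induce (↑(f i) : Set V)) := by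
    intro i
    rw [hScard i]
    exact le_csSup (gammaD_bdd _) ⟨oi i, hoi i, rfl⟩
  exact h1.trans (h2.trans (Finset.sum_le_sum fun i _ => h3 i))
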